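/- Let a > 0, b ≥ 0, c ≥ 0, and T > 0. Then there exists an initial value y₀ > 0 such that no function y : ℝ → ℝ satisfies simultaneously y(0) = y₀ and, for every t ∈ [0,T], y has derivative a·y(t)² − b·y(t) − c at t within [0,T]. That is, the scalar Riccati equation ẏ = a·y² − b·y − c with sufficiently large initial value has no solution on all of [0,T] (it explodes before time T). -/

import Mathlib

/-!
For large `y₀` and `y ≥ y₀`, the right-hand side dominates `(a/2)·y²`; in particular it is
positive at the level `y₀`, so a solution starting at `y₀` never drops below it. Then `1/y`
decreases at rate at least `a/2`, so `a·T/2 ≤ 1/y(0) - 1/y(T) < 1/y₀`, which is impossible once `y₀ ≥ 2/(a·T)`.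
-/

open Set Filter Topology

lemma eventually_half_mul_sq_le {a : ℝ} (ha : 0 < a) (b c : ℝ) :
    ∀ᶠ y in atTop, a / 2 * y ^ 2 ≤ a * y ^ 2 - b * y - c := by
  filter_upwards [eventually_ge_atTop 1, eventually_ge_atTop (2 * (|b| + |c|) / a)]
    with y hy₁ hy
  have hby : b * y ≤ |b| * y := mul_le_mul_of_nonneg_right (le_abs_self b) (by linarith)
  have hcy : c ≤ |c| * y := (le_abs_self c).trans (le_mul_of_one_le_right (abs_nonneg c) hy₁)
  have hlin : 2 * (|b| + |c|) ≤ a * y := by rwa [div_le_iff₀' ha] at hy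
  nlinarith

lemma HasDerivWithinAt.mono_Ici_of_Icc {f : ℝ → ℝ} {f' s T x : ℝ}
    (h : HasDerivWithinAt f f' (Icc s T) x) (hx : x ∈ Ico s T) :
    HasDerivWithinAt f f' (Ici x) x :=
  h.mono_of_mem_nhdsWithin (Icc_mem_nhdsGE_of_mem hx)

lemma le_of_hasDerivWithinAt_of_pos {y F : ℝ → ℝ} {s T m : ℝ}
    (hy : ∀ t ∈ Icc s T, HasDerivWithinAt y (F (y t)) (Icc s T) t)
    (hs : m ≤ y s) (hF : 0 < F m) : ∀ t ∈ Icc s T, m ≤ y t := by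
  intro t ht
  refine image_le_of_deriv_right_lt_deriv_boundary' continuousOn_const
    (fun x _ => hasDerivWithinAt_const x _ m) hs
    (fun x hx => (hy x hx).continuousWithinAt)
    (fun x hx => (hy x (Ico_subset_Icc_self hx)).mono_Ici_of_Icc hx) ?_ ht
  rintro x - hx
  rwa [← hx]

lemma mul_sub_le_inv_sub_inv {y y' : ℝ → ℝ} {k s T : ℝ}
    (hpos : ∀ t ∈ Icc s T, 0 < y t)
    (hy : ∀ t ∈ Icc s T, HasDerivWithinAt y (y' t) (Icc s T) t)
    (hy' : ∀ t ∈ Icc s T, k * y t ^ 2 ≤ y' t) :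
    ∀ t ∈ Icc s T, k * (t - s) ≤ (y s)⁻¹ - (y t)⁻¹ := by
  have hinv : ∀ t ∈ Icc s T,
      HasDerivWithinAt (fun t => (y s)⁻¹ - (y t)⁻¹) (y' t / y t ^ 2) (Icc s T) t := by
    intro t ht
    have h := ((hy t ht).inv (hpos t ht).ne').const_sub (y s)⁻¹
    rwa [neg_div, neg_neg] at h
  have hlin : ∀ x, HasDerivWithinAt (fun t => k * (t - s)) k (Ici x) x := fun x => by
    simpa using ((hasDerivWithinAt_id x _).sub_const s).const_mul k
  intro t ht
  refine image_le_of_deriv_right_le_deriv_boundary (by fun_prop) (fun x _ => hlin x) (by simp)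
    (fun x hx => (hinv x hx).continuousWithinAt)
    (fun x hx => (hinv x (Ico_subset_Icc_self hx)).mono_Ici_of_Icc hx) ?_ ht
  intro x hx
  have hx' := Ico_subset_Icc_self hx
  rw [le_div_iff₀ (pow_pos (hpos x hx') 2)]
  exact hy' x hx'

theorem scalar_riccati_explosion_general
    (a b c T : ℝ) (ha : 0 < a) (hT : 0 < T) :
    ∃ y₀ : ℝ, 0 < y₀ ∧
      ∀ y : ℝ → ℝ,
        ¬ (y 0 = y₀ ∧ ∀ t ∈ Set.Icc (0 : ℝ) T,
            HasDerivWithinAt y (a * (y t) ^ 2 - b * y t - c) (Set.Icc (0 : ℝ) T) t) := by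
  obtain ⟨N, hN⟩ := eventually_atTop.1 (eventually_half_mul_sq_le ha b c)
  set y₀ := max N (a / 2 * T)⁻¹
  have hy₀ : 0 < y₀ := (by positivity : 0 < (a / 2 * T)⁻¹).trans_le (le_max_right _ _)
  refine ⟨y₀, hy₀, ?_⟩
  rintro y ⟨hy0, hy⟩
  have hlow : ∀ t ∈ Icc 0 T, y₀ ≤ y t :=
    le_of_hasDerivWithinAt_of_pos (F := fun z => a * z ^ 2 - b * z - c) hy hy0.ge
      ((by positivity : 0 < a / 2 * y₀ ^ 2).trans_le (hN y₀ (le_max_left _ _)))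
  have hTmem : T ∈ Icc 0 T := right_mem_Icc.2 hT.le
  have hdecay := mul_sub_le_inv_sub_inv (fun t ht => hy₀.trans_le (hlow t ht)) hy
    (fun t ht => hN _ ((le_max_left _ _).trans (hlow t ht))) T hTmem
  have hyT : 0 < (y T)⁻¹ := inv_pos.2 (hy₀.trans_le (hlow T hTmem))
  have hinv : y₀⁻¹ ≤ a / 2 * T := (inv_le_comm₀ hy₀ (by positivity)).2 (le_max_right _ _)
  rw [hy0, sub_zero] at hdecay
  linarith

/-- Finite-time blow-up of the scalar Riccati equation `ẏ = a·y² − b·y − c`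
with positive quadratic coefficient: for sufficiently large initial data no
solution exists on all of `[0,T]`. -/
theorem scalar_riccati_explosion
    (a b c T : ℝ) (ha : 0 < a) (hb : 0 ≤ b) (hc : 0 ≤ c) (hT : 0 < T) :
    ∃ y₀ : ℝ, 0 < y₀ ∧
      ∀ y : ℝ → ℝ,
        ¬ (y 0 = y₀ ∧ ∀ t ∈ Set.Icc (0 : ℝ) T,
            HasDerivWithinAt y (a * (y t) ^ 2 - b * y t - c) (Set.Icc (0 : ℝ) T) t) :=
  scalar_riccati_explosion_general a b c T ha hT
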